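/- With notation as above (F non-archimedean local field, residue field 𝔽_q of odd characteristic, ε a unit reducing to a non-square), the conjugate g A g^{-1} (with g = diag(x,y^{-1},y,x^{-1})·unipotent(z) as above, x,y ∈ 𝒪_F^×, z ∈ 𝒪_F) lies in the set of matrices X with (4,1)-entry in ε + 𝔪 and (2,3)-entry in ϖ^{-1}ε + 𝒪_F (and the remaining congruence conditions of the support of f) if and only if the reductions satisfy z̄ = −ε̄ x̄²/2 and (ε̄²/4) x̄⁴ + 1 = ε̄ ȳ². -/

import Mathlib

/-!
Conjugating `A` by `g` gives an explicit matrix whose only entries that can leave `𝒪_F` are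
`ϖ⁻¹` times units or integers; as `v ϖ = exp (-1)`, the condition `v (ϖ⁻¹ a) ≤ 1` means
`a ∈ 𝔪`. So membership in the support reduces to the two congruences
`-2z/x² ≡ ε` and `(1 + z²)/y² ≡ ε` mod `𝔪`. Since `2` is a unit (odd residue characteristic),
the first says `z ≡ -εx²/2`, and then `z² ≡ ε²x⁴/4` turns the second into
`ε²x⁴/4 + 1 ≡ εy²`.
-/

open Matrix

/-- The support of the test function `f`: matrices `X ∈ 𝔰𝔭₄(F)` with
`X₁₃, X₁₄, X₂₄ ∈ 𝔪⁻¹`, `X₂₃ ∈ ϖ⁻¹ε + 𝒪_F`, `X₄₁ ∈ ε + 𝔪`, and all other entries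
in `𝒪_F`. -/
def inSupp {F : Type*} [Field F] [Valued F (WithZero (Multiplicative ℤ))]
    (ϖ ε : F) (X : Matrix (Fin 4) (Fin 4) F) : Prop :=
  Valued.v (X 0 0) ≤ 1 ∧ Valued.v (X 0 1) ≤ 1 ∧
    Valued.v (X 0 2) * Valued.v ϖ ≤ 1 ∧ Valued.v (X 0 3) * Valued.v ϖ ≤ 1 ∧
  Valued.v (X 1 0) ≤ 1 ∧ Valued.v (X 1 1) ≤ 1 ∧
    Valued.v (X 1 2 - ϖ⁻¹ * ε) ≤ 1 ∧ Valued.v (X 1 3) * Valued.v ϖ ≤ 1 ∧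
  Valued.v (X 2 0) ≤ 1 ∧ Valued.v (X 2 1) ≤ 1 ∧
    Valued.v (X 2 2) ≤ 1 ∧ Valued.v (X 2 3) ≤ 1 ∧
  Valued.v (X 3 0 - ε) < 1 ∧ Valued.v (X 3 1) ≤ 1 ∧
    Valued.v (X 3 2) ≤ 1 ∧ Valued.v (X 3 3) ≤ 1

open scoped WithZero
open WithZero

theorem two_ne_zero_of_odd_natCard {K : Type*} [Ring K] [Nontrivial K]
    (h : Odd (Nat.card K)) : (2 : K) ≠ 0 := by
  intro h2
  have horder : addOrderOf (1 : K) = 2 :=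
    addOrderOf_eq_prime (by rw [two_nsmul, ← two_mul, mul_one, h2]) one_ne_zero
  exact Nat.not_even_iff_odd.mpr h
    (even_iff_two_dvd.mpr (horder ▸ addOrderOf_dvd_natCard (1 : K)))

theorem WithZero.le_exp_neg_one_iff_lt_one {a : ℤᵐ⁰} : a ≤ exp (-1) ↔ a < 1 := by
  induction a using WithZero.expRecOn with
  | zero => simp
  | exp n => rw [← exp_zero, exp_le_exp, exp_lt_exp]; omega

namespace Valuation

variable {K Γ₀ : Type*} [Field K] [LinearOrderedCommGroupWithZero Γ₀] (v : Valuation K Γ₀)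

theorem map_two_eq_one_of_odd_natCard_residueField
    (h : Odd (Nat.card (IsLocalRing.ResidueField v.valuationSubring))) : v 2 = 1 := by
  have h2 : v ((2 : v.valuationSubring) : K) ≤ 1 := (2 : v.valuationSubring).2
  refine h2.eq_of_not_lt fun hlt => two_ne_zero_of_odd_natCard h ?_
  have hres : IsLocalRing.residue _ (2 : v.valuationSubring) = 0 :=
    (IsLocalRing.residue_eq_zero_iff _).mpr ((v.mem_maximalIdeal_iff K).mpr hlt)
  rwa [map_ofNat] at hres

variable {v}

theorem lt_one_iff_of_sub_lt_one {a b : K} (h : v (a - b) < 1) : v a < 1 ↔ v b < 1 := by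
  refine ⟨fun ha => ?_, fun hb => ?_⟩
  · simpa using v.map_add_lt (x := b - a) (by rwa [map_sub_swap]) ha
  · simpa using v.map_add_lt h hb

variable {ε x y z : K}

theorem map_neg_two_mul_div_sq_sub (h2 : v 2 = 1) (hx : v x = 1) :
    v (-(2 * z) / x ^ 2 - ε) = v (z + ε * x ^ 2 / 2) := by
  have hx0 : x ≠ 0 := by rintro rfl; simp at hx
  have h20 : (2 : K) ≠ 0 := by rintro h; simp [h] at h2
  have hfactor : -(2 * z) / x ^ 2 - ε = (z + ε * x ^ 2 / 2) * (-2 / x ^ 2) := by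
    field_simp
    ring
  simp [hfactor, h2, hx]

theorem map_one_add_sq_sub_mul_sq_lt_one_iff (h2 : v 2 = 1) (hε : v ε ≤ 1) (hx : v x ≤ 1)
    (hz : v z ≤ 1) (hzx : v (z + ε * x ^ 2 / 2) < 1) :
    v (1 + z ^ 2 - ε * y ^ 2) < 1 ↔ v (ε * y ^ 2 - (ε ^ 2 / 4 * x ^ 4 + 1)) < 1 := by
  have hsub : v (z - ε * x ^ 2 / 2) ≤ 1 :=
    v.map_sub_le hz (by simpa [h2] using mul_le_one' hε (pow_le_one' hx 2))
  have hsq : v (z ^ 2 - ε ^ 2 / 4 * x ^ 4) < 1 := by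
    have hfactor : z ^ 2 - ε ^ 2 / 4 * x ^ 4 = (z + ε * x ^ 2 / 2) * (z - ε * x ^ 2 / 2) := by
      rw [show (4 : K) = 2 ^ 2 by norm_num, div_eq_mul_inv (ε ^ 2), ← inv_pow]
      ring
    rw [hfactor, map_mul]
    exact mul_lt_one_of_lt_of_le hzx hsub
  have hdiff : 1 + z ^ 2 - ε * y ^ 2 - -(ε * y ^ 2 - (ε ^ 2 / 4 * x ^ 4 + 1)) =
      z ^ 2 - ε ^ 2 / 4 * x ^ 4 := by
    ring
  rw [lt_one_iff_of_sub_lt_one (hdiff ▸ hsq), map_neg]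

end Valuation

section Conjugation

variable {F : Type*} [Field F] {x y : F} (ϖ z : F)

theorem diagonal_mul_unipotent_inv (hx : x ≠ 0) (hy : y ≠ 0) :
    (diagonal ![x, y⁻¹, y, x⁻¹] * !![1, 0, 0, 0; z, 1, 0, 0; 0, 0, 1, 0; 0, 0, -z, 1])⁻¹ =
      !![x⁻¹, 0, 0, 0; -(z * x⁻¹), y, 0, 0; 0, 0, y⁻¹, 0; 0, 0, z * y⁻¹, x] := by
  refine inv_eq_right_inv ?_
  ext i j
  fin_cases i <;> fin_cases j <;> simp [mul_apply, Fin.sum_univ_four] <;> field_simp <;> ring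

theorem conj_antidiagonal_eq (hx : x ≠ 0) (hy : y ≠ 0) :
    let g := diagonal ![x, y⁻¹, y, x⁻¹] * !![1, 0, 0, 0; z, 1, 0, 0; 0, 0, 1, 0; 0, 0, -z, 1]
    g * !![0, 0, 0, ϖ⁻¹; 0, 0, ϖ⁻¹, 0; 1, 0, 0, 0; 0, 1, 0, 0] * g⁻¹ =
      !![0, 0, ϖ⁻¹ * (x * z / y), ϖ⁻¹ * x ^ 2;
         0, 0, ϖ⁻¹ * ((1 + z ^ 2) / y ^ 2), ϖ⁻¹ * (x * z / y);
         y / x, 0, 0, 0;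
         -(2 * z) / x ^ 2, y / x, 0, 0] := by
  intro g
  rw [diagonal_mul_unipotent_inv z hx hy]
  ext i j
  fin_cases i <;> fin_cases j <;> simp [g, mul_apply, Fin.sum_univ_four] <;> field_simp
  ring

end Conjugation

theorem inSupp_iff {F : Type*} [Field F] [Valued F ℤᵐ⁰] {ϖ ε x y z : F}
    (hϖ : Valued.v ϖ = exp (-1)) (hx : Valued.v x = 1) (hy : Valued.v y = 1)
    (hz : Valued.v z ≤ 1) :
    inSupp ϖ ε !![0, 0, ϖ⁻¹ * (x * z / y), ϖ⁻¹ * x ^ 2;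
        0, 0, ϖ⁻¹ * ((1 + z ^ 2) / y ^ 2), ϖ⁻¹ * (x * z / y);
        y / x, 0, 0, 0;
        -(2 * z) / x ^ 2, y / x, 0, 0] ↔
      Valued.v (1 + z ^ 2 - ε * y ^ 2) < 1 ∧ Valued.v (-(2 * z) / x ^ 2 - ε) < 1 := by
  have hϖ0 : Valued.v ϖ ≠ 0 := hϖ ▸ exp_ne_zero
  have hy0 : y ≠ 0 := by rintro rfl; simp at hy
  have hϖ_mul (a : F) : Valued.v (ϖ⁻¹ * a) * Valued.v ϖ = Valued.v a := by
    rw [map_mul, map_inv₀, mul_comm, mul_inv_cancel_left₀ hϖ0]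
  have hϖ_le (a : F) : Valued.v (ϖ⁻¹ * a) ≤ 1 ↔ Valued.v a < 1 := by
    rw [map_mul, map_inv₀, inv_mul_le_iff₀ (zero_lt_iff.2 hϖ0), mul_one, hϖ,
      le_exp_neg_one_iff_lt_one]
  have h12 : ϖ⁻¹ * ((1 + z ^ 2) / y ^ 2) - ϖ⁻¹ * ε = ϖ⁻¹ * ((1 + z ^ 2 - ε * y ^ 2) / y ^ 2) := by
    field_simp
  simp only [inSupp, of_apply, cons_val', cons_val_zero, cons_val_fin_one, cons_val_one, cons_val,
    h12, hϖ_mul, hϖ_le]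
  simp [hx, hy, hz]

theorem stmt12_general {F : Type*} [Field F] [Valued F (WithZero (Multiplicative ℤ))]
    (hqodd : Odd (Nat.card (IsLocalRing.ResidueField
      (Valued.v : Valuation F (WithZero (Multiplicative ℤ))).valuationSubring)))
    (ϖ : F) (hϖ : Valued.v ϖ =
      ((Multiplicative.ofAdd (-1 : ℤ) : Multiplicative ℤ) : WithZero (Multiplicative ℤ)))
    (ε : F) (hεu : Valued.v ε = 1)
    (x y z : F) (hx : Valued.v x = 1) (hy : Valued.v y = 1) (hz : Valued.v z ≤ 1) :
    let A : Matrix (Fin 4) (Fin 4) F :=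
      !![0, 0, 0, ϖ⁻¹; 0, 0, ϖ⁻¹, 0; 1, 0, 0, 0; 0, 1, 0, 0]
    let g : Matrix (Fin 4) (Fin 4) F :=
      Matrix.diagonal ![x, y⁻¹, y, x⁻¹] *
        !![1, 0, 0, 0; z, 1, 0, 0; 0, 0, 1, 0; 0, 0, -z, 1]
    inSupp ϖ ε (g * A * g⁻¹) ↔
      ((Valued.v : Valuation F (WithZero (Multiplicative ℤ))) (z + ε * x ^ 2 / 2) < 1 ∧
        (Valued.v : Valuation F (WithZero (Multiplicative ℤ)))
          (ε * y ^ 2 - (ε ^ 2 / 4 * x ^ 4 + 1)) < 1) := by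
  intro A g
  have h2 := Valued.v.map_two_eq_one_of_odd_natCard_residueField hqodd
  have hx0 : x ≠ 0 := by rintro rfl; simp at hx
  have hy0 : y ≠ 0 := by rintro rfl; simp at hy
  rw [show g * A * g⁻¹ = _ from conj_antidiagonal_eq ϖ z hx0 hy0, inSupp_iff hϖ hx hy hz,
    Valuation.map_neg_two_mul_div_sq_sub h2 hx]
  have hsecond := Valuation.map_one_add_sq_sub_mul_sq_lt_one_iff (y := y) h2 hεu.le hx.le hz
  exact ⟨fun ⟨h12, h30⟩ => ⟨h30, (hsecond h30).1 h12⟩, fun ⟨h30, h⟩ => ⟨(hsecond h30).2 h, h30⟩⟩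

/-- With `F` a non-archimedean local field with residue field of odd
cardinality, `ε` a unit whose reduction is a non-square, `ϖ` a uniformizer, `A` as in the
paper and `g = diag(x, y⁻¹, y, x⁻¹)·unipotent(z)` with `x, y ∈ 𝒪_F^×`, `z ∈ 𝒪_F`: the
conjugate `g A g⁻¹` lies in the support of `f` (in particular its `(4,1)`-entry is in
`ε + 𝔪` and its `(2,3)`-entry is in `ϖ⁻¹ε + 𝒪_F`) if and only if the reductions satisfy
`z̄ = −ε̄x̄²/2` and `(ε̄²/4)x̄⁴ + 1 = ε̄ȳ²`. -/
theorem stmt12 {F : Type*} [Field F] [Valued F (WithZero (Multiplicative ℤ))]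
    (hqodd : Odd (Nat.card (IsLocalRing.ResidueField
      (Valued.v : Valuation F (WithZero (Multiplicative ℤ))).valuationSubring)))
    (ϖ : F) (hϖ : Valued.v ϖ =
      ((Multiplicative.ofAdd (-1 : ℤ) : Multiplicative ℤ) : WithZero (Multiplicative ℤ)))
    (ε : F) (hεu : Valued.v ε = 1)
    (hεns : ∀ t : F, Valued.v t ≤ 1 → ¬ Valued.v (ε - t ^ 2) < 1)
    (x y z : F) (hx : Valued.v x = 1) (hy : Valued.v y = 1) (hz : Valued.v z ≤ 1) :
    let A : Matrix (Fin 4) (Fin 4) F :=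
      !![0, 0, 0, ϖ⁻¹; 0, 0, ϖ⁻¹, 0; 1, 0, 0, 0; 0, 1, 0, 0]
    let g : Matrix (Fin 4) (Fin 4) F :=
      Matrix.diagonal ![x, y⁻¹, y, x⁻¹] *
        !![1, 0, 0, 0; z, 1, 0, 0; 0, 0, 1, 0; 0, 0, -z, 1]
    inSupp ϖ ε (g * A * g⁻¹) ↔
      ((Valued.v : Valuation F (WithZero (Multiplicative ℤ))) (z + ε * x ^ 2 / 2) < 1 ∧
        (Valued.v : Valuation F (WithZero (Multiplicative ℤ)))
          (ε * y ^ 2 - (ε ^ 2 / 4 * x ^ 4 + 1)) < 1) :=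
  stmt12_general hqodd ϖ hϖ ε hεu x y z hx hy hz
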